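/- arXiv:2303.11479 — 7 statements merged into one kernel-verified Lean document; each statement's English description precedes it below -/
import Mathlib

section
/- Let v ∈ ℝ^M be a strictly positive vector such that 𝟙, v, and v⊙v are linearly independent, and let c > 0 and t, u ∈ ℝ with t ≠ u such that u·vᵢ + (1−u) > 0 for all i. Define s ∈ ℝ^M by sᵢ = c·(t·vᵢ + (1−t))/(u·vᵢ + (1−u)). Then 𝟙, s, and s⊙s are linearly independent. -/
/-!
Clearing the denominator `(r v + w)²` turns a quadratic relation `A + B s + C s² = 0` on the
Möbius transform `s = (p v + q) / (r v + w)` into a quadratic relation on `v`, whose coefficients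
depend linearly on `(A, B, C)` through the symmetric square of `[[p, q], [r, w]]`. That map has
determinant `-(p w - q r)³`, so it is injective, and independence of `1, v, v²` transfers to
`1, s, s²`.
-/

variable {K ι : Type*} [Field K]

theorem linearIndependent_one_self_mul_self_iff {v : ι → K} :
    LinearIndependent K ![fun _ => (1 : K), v, v * v] ↔
      ∀ a b c : K, (∀ i, a + b * v i + c * (v i * v i) = 0) → a = 0 ∧ b = 0 ∧ c = 0 := by
  rw [Fintype.linearIndependent_iff]
  constructor
  · intro h a b c habc
    have hg := h ![a, b, c] <| funext fun i => by simpa [Fin.sum_univ_three] using habc i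
    exact ⟨hg 0, hg 1, hg 2⟩
  · intro h g hg
    obtain ⟨h0, h1, h2⟩ := h (g 0) (g 1) (g 2) fun i => by
      simpa [Fin.sum_univ_three, mul_assoc] using congrFun hg i
    intro j
    fin_cases j <;> assumption

/-- The three combinations below invert the symmetric square of `[[p, q], [r, w]]` up to the
factor `(p w - q r)²`. -/
theorem eq_zero_of_symSq_coeffs_eq_zero {p q r w A B C : K} (hdet : p * w - q * r ≠ 0)
    (h0 : A * w ^ 2 + B * q * w + C * q ^ 2 = 0)
    (h1 : A * (2 * r * w) + B * (p * w + q * r) + C * (2 * p * q) = 0)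
    (h2 : A * r ^ 2 + B * p * r + C * p ^ 2 = 0) :
    A = 0 ∧ B = 0 ∧ C = 0 := by
  have hdet2 : (p * w - q * r) ^ 2 ≠ 0 := pow_ne_zero 2 hdet
  refine ⟨?_, ?_, ?_⟩
  · refine (mul_eq_zero.mp ?_).resolve_right hdet2
    linear_combination p ^ 2 * h0 - p * q * h1 + q ^ 2 * h2
  · refine (mul_eq_zero.mp ?_).resolve_right hdet2
    linear_combination -(2 * r * p) * h0 + (p * w + q * r) * h1 - 2 * q * w * h2
  · refine (mul_eq_zero.mp ?_).resolve_right hdet2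
    linear_combination r ^ 2 * h0 - r * w * h1 + w ^ 2 * h2

theorem LinearIndependent.one_moebius_mul_moebius {v s : ι → K} {p q r w : K}
    (hli : LinearIndependent K ![fun _ => (1 : K), v, v * v]) (hdet : p * w - q * r ≠ 0)
    (hden : ∀ i, r * v i + w ≠ 0) (hs : ∀ i, s i = (p * v i + q) / (r * v i + w)) :
    LinearIndependent K ![fun _ => (1 : K), s, s * s] := by
  rw [linearIndependent_one_self_mul_self_iff] at hli ⊢
  intro A B C hrel
  have hcleared : ∀ i, s i * (r * v i + w) = p * v i + q := fun i => by
    rw [hs i, div_mul_cancel₀ _ (hden i)]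
  obtain ⟨h0, h1, h2⟩ := hli (A * w ^ 2 + B * q * w + C * q ^ 2)
    (A * (2 * r * w) + B * (p * w + q * r) + C * (2 * p * q)) (A * r ^ 2 + B * p * r + C * p ^ 2)
    fun i => by
      linear_combination (r * v i + w) ^ 2 * hrel i
        - (B * (r * v i + w) + C * (s i * (r * v i + w) + p * v i + q)) * hcleared i
  exact eq_zero_of_symSq_coeffs_eq_zero hdet h0 h1 h2

theorem stmt2_general {M : ℕ} (v : Fin M → ℝ)
    (hli : LinearIndependent ℝ ![fun _ => (1 : ℝ), v, v * v])
    (c t u : ℝ) (hc : 0 < c) (htu : t ≠ u)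
    (hden : ∀ i, 0 < u * v i + (1 - u))
    (s : Fin M → ℝ)
    (hs : ∀ i, s i = c * (t * v i + (1 - t)) / (u * v i + (1 - u))) :
    LinearIndependent ℝ ![fun _ => (1 : ℝ), s, s * s] := by
  have hdet : c * t * (1 - u) - c * (1 - t) * u ≠ 0 := by
    rw [show c * t * (1 - u) - c * (1 - t) * u = c * (t - u) by ring]
    exact mul_ne_zero hc.ne' (sub_ne_zero.mpr htu)
  refine hli.one_moebius_mul_moebius hdet (fun i => (hden i).ne') fun i => ?_
  rw [hs i]
  ring

/-- independence of 𝟙, s, s⊙s for a Möbius-type transform s of v. -/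
theorem stmt2 {M : ℕ} (v : Fin M → ℝ) (hv : ∀ i, 0 < v i)
    (hli : LinearIndependent ℝ ![fun _ => (1 : ℝ), v, v * v])
    (c t u : ℝ) (hc : 0 < c) (htu : t ≠ u)
    (hden : ∀ i, 0 < u * v i + (1 - u))
    (s : Fin M → ℝ)
    (hs : ∀ i, s i = c * (t * v i + (1 - t)) / (u * v i + (1 - u))) :
    LinearIndependent ℝ ![fun _ => (1 : ℝ), s, s * s] :=
  stmt2_general v hli c t u hc htu hden s hs
end

section
/- Let A be a rank-2 real matrix with all entries strictly positive and all columns of unit Euclidean norm. Suppose columns aᵢ and aⱼ of A minimize the inner product (equivalently, cosine similarity) over all pairs of columns of A. Then aᵢ and aⱼ are linearly independent, and every column of A is a non-negative linear combination of aᵢ and aⱼ. -/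
/-- minimum cosine similarity columns of a positive rank-2 matrix with
unit-norm columns form a basis of a cone containing all columns. -/
theorem stmt4 {M N : ℕ} (A : Matrix (Fin M) (Fin N) ℝ)
    (hrank : A.rank = 2)
    (hpos : ∀ m n, 0 < A m n)
    (hunit : ∀ n, ∑ m, A m n ^ 2 = 1)
    (i j : Fin N)
    (hmin : ∀ p q : Fin N, ∑ m, A m i * A m j ≤ ∑ m, A m p * A m q) :
    LinearIndependent ℝ ![fun m => A m i, fun m => A m j] ∧
    ∀ k : Fin N, ∃ α β : ℝ, 0 ≤ α ∧ 0 ≤ β ∧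
      (fun m => A m k) = α • (fun m => A m i) + β • (fun m => A m j) := by
  classical
  have hM : (Finset.univ : Finset (Fin M)).Nonempty := by
    rcases (Finset.univ : Finset (Fin M)).eq_empty_or_nonempty with h | h
    · exfalso; have := hunit i; rw [h, Finset.sum_empty] at this; norm_num at this
    · exact h
  set g : ℝ := ∑ m, A m i * A m j with hg
  have hdotpos : ∀ p q : Fin N, 0 < ∑ m, A m p * A m q := fun p q =>
    Finset.sum_pos (fun m _ => mul_pos (hpos m p) (hpos m q)) hM
  have hCS : ∀ p q : Fin N, (∑ m, A m p * A m q) ≤ 1 := by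
    intro p q
    have h2 := Finset.sum_mul_sq_le_sq_mul_sq Finset.univ (fun m => A m p) (fun m => A m q)
    rw [hunit p, hunit q] at h2
    nlinarith [hdotpos p q]
  have hg0 : 0 < g := hdotpos i j
  -- g < 1
  have hg1 : g < 1 := by
    rcases lt_or_ge g 1 with h | h
    · exact h
    exfalso
    have hgeq : g = 1 := le_antisymm (hCS i j) h
    have hcols : ∀ q m, A m q = A m i := by
      intro q m
      have e3 : ∑ m, A m i * A m q = 1 := le_antisymm (hCS i q) (hgeq ▸ hmin i q)
      have hsum : ∑ m', (A m' i - A m' q)^2 = 0 := by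
        have expand : ∀ m' : Fin M, (A m' i - A m' q)^2
            = (A m' i ^ 2 + A m' q ^ 2) - 2 * (A m' i * A m' q) := fun m' => by ring
        rw [Finset.sum_congr rfl (fun m' _ => expand m'), Finset.sum_sub_distrib,
          Finset.sum_add_distrib, ← Finset.mul_sum, hunit i, hunit q, e3]
        ring
      have := (Finset.sum_eq_zero_iff_of_nonneg (fun m' _ => sq_nonneg _)).mp hsum m
        (Finset.mem_univ m)
      have := pow_eq_zero_iff (n := 2) (by norm_num) |>.mp this
      linarith [sub_eq_zero.mp this]
    have hA : A = (Matrix.of fun m (_ : Fin 1) => A m i) *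
        (Matrix.of fun (_ : Fin 1) n => (1 : ℝ)) := by
      ext m n
      simp [Matrix.mul_apply, hcols n m]
    have hle : A.rank ≤ 1 := by
      rw [hA]
      exact (Matrix.rank_mul_le_left _ _).trans
        ((Matrix.rank_le_card_width _).trans (by simp))
    omega
  have huniti : ∑ m, A m i * A m i = 1 := by
    rw [← hunit i]; exact Finset.sum_congr rfl fun m _ => (sq (A m i)).symm
  have hunitj : ∑ m, A m j * A m j = 1 := by
    rw [← hunit j]; exact Finset.sum_congr rfl fun m _ => (sq (A m j)).symm
  set ai : Fin M → ℝ := fun m => A m i with hai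
  set aj : Fin M → ℝ := fun m => A m j with haj
  -- linear independence
  have hli : LinearIndependent ℝ ![ai, aj] := by
    rw [LinearIndependent.pair_iff]
    intro s t h
    have hpt : ∀ m, s * A m i + t * A m j = 0 := by
      intro m
      have := congrFun h m
      simpa [hai, haj] using this
    have e1 : s + t * g = 0 := by
      have h0 : ∑ m, (s * (A m i * A m i) + t * (A m i * A m j)) = 0 := by
        apply Finset.sum_eq_zero; intro m _
        linear_combination A m i * hpt m
      rw [Finset.sum_add_distrib, ← Finset.mul_sum, ← Finset.mul_sum, huniti] at h0
      rw [hg]; linarith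
    have e2 : s * g + t = 0 := by
      have h0 : ∑ m, (s * (A m j * A m i) + t * (A m j * A m j)) = 0 := by
        apply Finset.sum_eq_zero; intro m _
        linear_combination A m j * hpt m
      rw [Finset.sum_add_distrib, ← Finset.mul_sum, ← Finset.mul_sum, hunitj] at h0
      have hcomm : ∑ m, A m j * A m i = g := by
        rw [hg]; exact Finset.sum_congr rfl fun m _ => mul_comm _ _
      rw [hcomm] at h0; linarith
    have hg2 : 0 < 1 - g ^ 2 := by nlinarith
    have hs : s * (1 - g ^ 2) = 0 := by linear_combination e1 - g * e2
    have hs0 : s = 0 := by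
      rcases mul_eq_zero.mp hs with h' | h'
      · exact h'
      · exfalso; linarith
    refine ⟨hs0, ?_⟩
    rw [hs0] at e2; linarith
  refine ⟨hli, ?_⟩
  -- span {ai, aj} equals the column space
  have hcolmem : ∀ k : Fin N, (fun m => A m k) ∈ LinearMap.range A.mulVecLin := by
    intro k
    exact ⟨Pi.single k 1, by ext m; simp [Matrix.mulVecLin_apply]⟩
  have hspan : Submodule.span ℝ {ai, aj} = LinearMap.range A.mulVecLin := by
    apply Submodule.eq_of_le_of_finrank_le
    · rw [Submodule.span_le]
      rintro x (rfl | rfl)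
      · exact hcolmem i
      · exact hcolmem j
    · have hrange : Set.range ![ai, aj] = {ai, aj} := by
        ext x
        simp only [Set.mem_range, Fin.exists_fin_two, Matrix.cons_val_zero,
          Matrix.cons_val_one, Matrix.head_cons, Set.mem_insert_iff, Set.mem_singleton_iff]
        constructor
        · rintro (h' | h') <;> [exact Or.inl h'.symm; exact Or.inr h'.symm]
        · rintro (h' | h') <;> [exact Or.inl h'.symm; exact Or.inr h'.symm]
      have h2 := finrank_span_eq_card hli
      rw [hrange] at h2
      rw [h2]
      have : Module.finrank ℝ (LinearMap.range A.mulVecLin) = 2 := hrank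
      rw [this]
      simp
  intro k
  have hk : (fun m => A m k) ∈ Submodule.span ℝ ({ai, aj} : Set (Fin M → ℝ)) := by
    rw [hspan]; exact hcolmem k
  rw [Submodule.mem_span_pair] at hk
  obtain ⟨α, β, hαβ⟩ := hk
  have hpt : ∀ m, A m k = α * A m i + β * A m j := by
    intro m
    have := congrFun hαβ m
    simpa [hai, haj, eq_comm] using this.symm
  set u : ℝ := ∑ m, A m i * A m k with hu
  set v : ℝ := ∑ m, A m j * A m k with hv
  have eu : u = α + β * g := by
    rw [hu]
    have : ∀ m : Fin M, A m i * A m k = α * (A m i * A m i) + β * (A m i * A m j) := by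
      intro m; rw [hpt m]; ring
    rw [Finset.sum_congr rfl fun m _ => this m, Finset.sum_add_distrib,
      ← Finset.mul_sum, ← Finset.mul_sum, huniti, hg]
    ring
  have ev : v = α * g + β := by
    rw [hv]
    have : ∀ m : Fin M, A m j * A m k = α * (A m j * A m i) + β * (A m j * A m j) := by
      intro m; rw [hpt m]; ring
    rw [Finset.sum_congr rfl fun m _ => this m, Finset.sum_add_distrib,
      ← Finset.mul_sum, ← Finset.mul_sum, hunitj]
    have hcomm : ∑ m, A m j * A m i = g := by
      rw [hg]; exact Finset.sum_congr rfl fun m _ => mul_comm _ _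
    rw [hcomm]; ring
  have hgu : g ≤ u := hmin i k
  have hgv : g ≤ v := hmin j k
  have hu1 : u ≤ 1 := hCS i k
  have hv1 : v ≤ 1 := hCS j k
  have hg2 : 0 < 1 - g ^ 2 := by nlinarith
  have keyu : α * (1 - g ^ 2) = u - g * v := by linear_combination g * ev - eu
  have keyv : β * (1 - g ^ 2) = v - g * u := by linear_combination g * eu - ev
  have h1 : 0 ≤ u - g * v := by nlinarith [mul_nonneg hg0.le (sub_nonneg.mpr hv1)]
  have h2 : 0 ≤ v - g * u := by nlinarith [mul_nonneg hg0.le (sub_nonneg.mpr hu1)]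
  refine ⟨α, β, ?_, ?_, ?_⟩
  · nlinarith [keyu, h1, hg2]
  · nlinarith [keyv, h2, hg2]
  · funext m
    rw [hpt m]
    simp [hai, haj]
end

section
/- Let y ∈ ℝ^M be a vector with at least one strictly positive entry, and let y₊ denote the vector obtained from y by replacing all negative entries with zero. Then x* = y₊/‖y₊‖ is the unique minimizer of ‖x − y‖² over all x ∈ ℝ^M satisfying x ≥ 0 (elementwise) and ‖x‖ = 1. -/
/-!
For a unit vector `x`, `‖x - y‖² = 1 - 2⟪x, y⟫ + ‖y‖²`, so minimizing the distance means
maximizing `⟪x, y⟫`. For `x ≥ 0` we have `⟪x, y⟫ ≤ ⟪x, y₊⟫ ≤ ‖y₊‖` by Cauchy–Schwarz; the bound is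
attained at `x*` because `⟪y₊, y⟫ = ‖y₊‖²`, and equality in Cauchy–Schwarz forces `x = x*`.
-/

open scoped RealInnerProductSpace

theorem eq_inv_norm_smul_of_norm_le_inner {F : Type*} [NormedAddCommGroup F]
    [InnerProductSpace ℝ F] {x v : F} (hv : v ≠ 0) (hx : ‖x‖ = 1) (h : ‖v‖ ≤ ⟪x, v⟫) :
    x = ‖v‖⁻¹ • v := by
  have hcs : ⟪x, v⟫ = ‖x‖ * ‖v‖ :=
    le_antisymm (real_inner_le_norm x v) (by rwa [hx, one_mul])
  rw [eq_inv_smul_iff₀ (norm_ne_zero_iff.mpr hv)]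
  simpa [hx] using inner_eq_norm_mul_iff_real.mp hcs

namespace EuclideanSpace

variable {ι : Type*} [Fintype ι]

theorem inner_le_inner_of_nonneg_of_le {x y z : EuclideanSpace ℝ ι} (hx : ∀ i, 0 ≤ x i)
    (hyz : ∀ i, y i ≤ z i) : ⟪x, y⟫ ≤ ⟪x, z⟫ := by
  simp only [PiLp.inner_apply, RCLike.inner_apply, conj_trivial]
  exact Finset.sum_le_sum fun i _ => mul_le_mul_of_nonneg_right (hyz i) (hx i)

theorem inner_eq_norm_sq_of_apply_eq_max_zero {y yplus : EuclideanSpace ℝ ι}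
    (hyplus : ∀ i, yplus i = max (y i) 0) : ⟪yplus, y⟫ = ‖yplus‖ ^ 2 := by
  rw [← real_inner_self_eq_norm_sq]
  simp only [PiLp.inner_apply, RCLike.inner_apply, conj_trivial, hyplus]
  refine Finset.sum_congr rfl fun i _ => ?_
  rcases le_total 0 (y i) with h | h <;> simp [h]

end EuclideanSpace

open EuclideanSpace in
/-- projection onto the intersection of the non-negative orthant and the
unit sphere, case of a vector with at least one positive entry. -/
theorem stmt6 {M : ℕ} (y : EuclideanSpace ℝ (Fin M)) (hy : ∃ i, 0 < y i) :
    ∀ yplus xstar : EuclideanSpace ℝ (Fin M),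
      yplus = (fun i => max (y i) 0) → xstar = ‖yplus‖⁻¹ • yplus →
      ((∀ i, 0 ≤ xstar i) ∧ ‖xstar‖ = 1 ∧
        ∀ x : EuclideanSpace ℝ (Fin M), (∀ i, 0 ≤ x i) → ‖x‖ = 1 →
          ‖xstar - y‖ ^ 2 ≤ ‖x - y‖ ^ 2 ∧ (‖x - y‖ ^ 2 = ‖xstar - y‖ ^ 2 → x = xstar)) := by
  intro yplus xstar hyplus hxstar
  have hcoord (i : Fin M) : yplus i = max (y i) 0 := congrFun hyplus i
  have hne : yplus ≠ 0 := by
    obtain ⟨i, hi⟩ := hy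
    intro h
    simpa [h, hi.not_ge] using hcoord i
  have hxstar_unit : ‖xstar‖ = 1 := hxstar ▸ norm_smul_inv_norm hne
  have hxstar_inner : ⟪xstar, y⟫ = ‖yplus‖ := by
    rw [hxstar, real_inner_smul_left, inner_eq_norm_sq_of_apply_eq_max_zero hcoord]
    field_simp [norm_ne_zero_iff.mpr hne]
  refine ⟨fun i => ?_, hxstar_unit, fun x hx hx_unit => ?_⟩
  · simp only [hxstar, PiLp.smul_apply, smul_eq_mul, hcoord]
    positivity
  have hmono : ⟪x, y⟫ ≤ ⟪x, yplus⟫ :=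
    inner_le_inner_of_nonneg_of_le hx fun i => (hcoord i).symm ▸ le_max_left _ _
  have hcs : ⟪x, yplus⟫ ≤ ‖yplus‖ := by simpa [hx_unit] using real_inner_le_norm x yplus
  rw [norm_sub_sq_real, norm_sub_sq_real, hx_unit, hxstar_unit, hxstar_inner]
  exact ⟨by linarith, fun heq =>
    hxstar ▸ eq_inv_norm_smul_of_norm_le_inner hne hx_unit (by linarith)⟩
end

section
/- Let y ∈ ℝ^M be a vector with all entries non-positive, and let i* be an index minimizing |yᵢ|. Then the standard basis vector e_{i*} is a minimizer of ‖x − y‖² over all x ∈ ℝ^M satisfying x ≥ 0 (elementwise) and ‖x‖ = 1. -/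
/-!
Since `x` and `e_{i*}` both lie on the unit sphere, `‖x - y‖²` and `‖e_{i*} - y‖²` differ only
through `-2⟪·, y⟫`, so it suffices to show `⟪x, y⟫ ≤ y_{i*}`. For `x ≥ 0` with `‖x‖ = 1` we have
`∑ xᵢ ≥ ‖x‖ = 1`, and `y_{i*}` is the largest entry of `y`, which is non-positive; hence
`⟪x, y⟫ ≤ (∑ xᵢ) y_{i*} ≤ y_{i*}`.
-/

open Finset
open scoped InnerProductSpace

theorem norm_sub_sq_le_norm_sub_sq_of_inner_le {E : Type*} [NormedAddCommGroup E]
    [InnerProductSpace ℝ E] {x x' y : E} (hnorm : ‖x‖ = ‖x'‖) (hinner : ⟪x', y⟫_ℝ ≤ ⟪x, y⟫_ℝ) :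
    ‖x - y‖ ^ 2 ≤ ‖x' - y‖ ^ 2 := by
  rw [norm_sub_sq_real, norm_sub_sq_real, hnorm]
  linarith

namespace EuclideanSpace

variable {ι : Type*} [Fintype ι]

theorem norm_le_sum_of_nonneg {x : EuclideanSpace ℝ ι} (hx : ∀ i, 0 ≤ x i) :
    ‖x‖ ≤ ∑ i, x i := by
  refine le_of_pow_le_pow_left₀ two_ne_zero (sum_nonneg fun i _ ↦ hx i) ?_
  rw [real_norm_sq_eq]
  exact sum_sq_le_sq_sum_of_nonneg fun i _ ↦ hx i

theorem inner_le_sum_mul_of_le {x y : EuclideanSpace ℝ ι} (hx : ∀ i, 0 ≤ x i) {c : ℝ}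
    (hy : ∀ i, y i ≤ c) : ⟪x, y⟫_ℝ ≤ (∑ i, x i) * c := by
  rw [PiLp.inner_apply, sum_mul]
  gcongr with i
  rw [RCLike.inner_apply, conj_trivial, mul_comm]
  exact mul_le_mul_of_nonneg_left (hy i) (hx i)

end EuclideanSpace

/-- projection onto non-negative orthant ∩ unit sphere for a non-positive
vector is the canonical vector at an index of minimal |yᵢ|. -/
theorem stmt7 {M : ℕ} (y : EuclideanSpace ℝ (Fin M)) (hy : ∀ i, y i ≤ 0)
    (istar : Fin M) (hmin : ∀ j, |y istar| ≤ |y j|) :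
    ∀ x : EuclideanSpace ℝ (Fin M), (∀ i, 0 ≤ x i) → ‖x‖ = 1 →
      ‖(EuclideanSpace.single istar (1 : ℝ)) - y‖ ^ 2 ≤ ‖x - y‖ ^ 2 := by
  intro x hx hnx
  have hy_le : ∀ j, y j ≤ y istar := fun j ↦ by
    have := hmin j
    rw [abs_of_nonpos (hy istar), abs_of_nonpos (hy j)] at this
    linarith
  have hsum : 1 ≤ ∑ i, x i := hnx ▸ EuclideanSpace.norm_le_sum_of_nonneg hx
  refine norm_sub_sq_le_norm_sub_sq_of_inner_le (by simp [PiLp.norm_single, hnx]) ?_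
  calc ⟪x, y⟫_ℝ ≤ (∑ i, x i) * y istar := EuclideanSpace.inner_le_sum_mul_of_le hx hy_le
    _ ≤ 1 * y istar := mul_le_mul_of_nonpos_right hsum (hy istar)
    _ = ⟪EuclideanSpace.single istar (1 : ℝ), y⟫_ℝ := by
      simp [EuclideanSpace.inner_single_left]
end

section
/- Let T be an invertible 2×2 real matrix and let C⁽¹⁾, ..., C⁽ᴷ⁾ be non-negative 2×N_k matrices with no zero columns whose horizontal concatenation C has rank 2. Define r_a = minᵢ C_{2,i}/C_{1,i} and r_b = minᵢ C_{1,i}/C_{2,i} over all columns i of C (with the convention that a ratio with zero denominator is +∞). Then T⁻¹C⁽ᵏ⁾ ≥ 0 elementwise for all k if and only if T⁻¹·[1, r_b; r_a, 1] ≥ 0 elementwise, i.e., T⁻¹ applied to the vectors (1, r_a)ᵀ and (r_b, 1)ᵀ yields non-negative vectors. -/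
/-- the per-patch non-negativity constraints reduce to two extreme columns. -/
theorem stmt8 {K : ℕ} (Nk : Fin K → ℕ)
    (T : Matrix (Fin 2) (Fin 2) ℝ) (hT : IsUnit T.det)
    (C : (k : Fin K) → Matrix (Fin 2) (Fin (Nk k)) ℝ)
    (hnn : ∀ k r i, 0 ≤ C k r i)
    (hnz : ∀ k i, (fun r => C k r i) ≠ 0)
    (hrank : (Matrix.of fun r (p : (k : Fin K) × Fin (Nk k)) => C p.1 r p.2).rank = 2)
    (ra rb : ℝ)
    (hra : IsLeast {x : ℝ | ∃ p : (k : Fin K) × Fin (Nk k),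
      C p.1 0 p.2 ≠ 0 ∧ x = C p.1 1 p.2 / C p.1 0 p.2} ra)
    (hrb : IsLeast {x : ℝ | ∃ p : (k : Fin K) × Fin (Nk k),
      C p.1 1 p.2 ≠ 0 ∧ x = C p.1 0 p.2 / C p.1 1 p.2} rb) :
    (∀ k, ∀ r i, 0 ≤ (T⁻¹ * C k) r i) ↔ (∀ r i, 0 ≤ (T⁻¹ * !![1, rb; ra, 1]) r i) := by
  set A := T⁻¹ with hA
  obtain ⟨⟨pa, hpa0, hpae⟩, hralb⟩ := hra
  obtain ⟨⟨pb, hpb1, hpbe⟩, hrblb⟩ := hrb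
  have hpa0' : 0 < C pa.1 0 pa.2 := lt_of_le_of_ne (hnn _ _ _) (Ne.symm hpa0)
  have hpb1' : 0 < C pb.1 1 pb.2 := lt_of_le_of_ne (hnn _ _ _) (Ne.symm hpb1)
  have hra0 : 0 ≤ ra := hpae ▸ div_nonneg (hnn _ _ _) (hnn _ _ _)
  have hrb0 : 0 ≤ rb := hpbe ▸ div_nonneg (hnn _ _ _) (hnn _ _ _)
  have hya : C pa.1 1 pa.2 = ra * C pa.1 0 pa.2 := by
    rw [hpae]; field_simp
  have hxb : C pb.1 0 pb.2 = rb * C pb.1 1 pb.2 := by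
    rw [hpbe]; field_simp
  have key1 : ∀ (k : Fin K) (i : Fin (Nk k)), ra * C k 0 i ≤ C k 1 i := by
    intro k i
    rcases eq_or_lt_of_le (hnn k 0 i) with h | h
    · rw [← h, mul_zero]; exact hnn k 1 i
    · have hle : ra ≤ C k 1 i / C k 0 i := hralb ⟨⟨k, i⟩, h.ne', rfl⟩
      calc ra * C k 0 i ≤ (C k 1 i / C k 0 i) * C k 0 i :=
            mul_le_mul_of_nonneg_right hle h.le
        _ = C k 1 i := by field_simp
  have key2 : ∀ (k : Fin K) (i : Fin (Nk k)), rb * C k 1 i ≤ C k 0 i := by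
    intro k i
    rcases eq_or_lt_of_le (hnn k 1 i) with h | h
    · rw [← h, mul_zero]; exact hnn k 0 i
    · have hle : rb ≤ C k 0 i / C k 1 i := hrblb ⟨⟨k, i⟩, h.ne', rfl⟩
      calc rb * C k 1 i ≤ (C k 0 i / C k 1 i) * C k 1 i :=
            mul_le_mul_of_nonneg_right hle h.le
        _ = C k 0 i := by field_simp
  have hprod : ra * rb ≤ 1 := by
    have h1 := key2 pa.1 pa.2
    rw [hya] at h1
    nlinarith
  have hlt : ra * rb < 1 := by
    rcases lt_or_eq_of_le hprod with h | h
    · exact h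
    · exfalso
      have hcol : ∀ p : (k : Fin K) × Fin (Nk k), C p.1 1 p.2 = ra * C p.1 0 p.2 := by
        intro p
        have h1 := key1 p.1 p.2
        have h2 := key2 p.1 p.2
        have h4 : ra * (rb * C p.1 1 p.2) = C p.1 1 p.2 := by
          rw [← mul_assoc, h, one_mul]
        have h3 : C p.1 1 p.2 ≤ ra * C p.1 0 p.2 := by
          have h5 := mul_le_mul_of_nonneg_left h2 hra0
          linarith
        linarith
      set M : Matrix (Fin 2) ((k : Fin K) × Fin (Nk k)) ℝ :=
        Matrix.of fun r (p : (k : Fin K) × Fin (Nk k)) => C p.1 r p.2 with hM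
      have hr : LinearMap.range M.mulVecLin ≤ Submodule.span ℝ {![1, ra]} := by
        rw [Matrix.range_mulVecLin]
        apply Submodule.span_le.2
        rintro _ ⟨p, rfl⟩
        refine Submodule.mem_span_singleton.2 ⟨C p.1 0 p.2, ?_⟩
        funext r
        fin_cases r
        · simp [hM]
        · simp [hM, hcol p, mul_comm]
      have hfin : M.rank ≤ 1 := by
        have h1 := Submodule.finrank_mono hr
        have h2 : Module.finrank ℝ (Submodule.span ℝ ({![1, ra]} : Set (Fin 2 → ℝ))) ≤ 1 := by
          have hne : (![1, ra] : Fin 2 → ℝ) ≠ 0 := by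
            intro hc
            have := congrFun hc 0
            simp at this
          rw [finrank_span_singleton hne]
        exact le_trans h1 h2
      rw [hrank] at hfin
      omega
  have hden : 0 < 1 - ra * rb := by linarith
  constructor
  · intro h r i
    fin_cases i
    · have hca := h pa.1 r pa.2
      rw [Matrix.mul_apply, Fin.sum_univ_two] at hca
      rw [hya] at hca
      have h2 : 0 ≤ C pa.1 0 pa.2 * (A r 0 + A r 1 * ra) := by nlinarith
      have h3 := nonneg_of_mul_nonneg_right h2 hpa0'
      simp [Matrix.mul_apply, Fin.sum_univ_two]
      linarith
    · have hcb := h pb.1 r pb.2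
      rw [Matrix.mul_apply, Fin.sum_univ_two] at hcb
      rw [hxb] at hcb
      have h2 : 0 ≤ C pb.1 1 pb.2 * (A r 0 * rb + A r 1) := by nlinarith
      have h3 := nonneg_of_mul_nonneg_right h2 hpb1'
      simp [Matrix.mul_apply, Fin.sum_univ_two]
      linarith
  · intro h k r i
    have h0 := h r 0
    have h1 := h r 1
    rw [Matrix.mul_apply, Fin.sum_univ_two] at h0 h1
    simp at h0 h1
    rw [Matrix.mul_apply, Fin.sum_univ_two]
    have hx := hnn k 0 i
    have hy := hnn k 1 i
    have k1 := key1 k i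
    have k2 := key2 k i
    have hs : 0 ≤ C k 0 i - rb * C k 1 i := by linarith
    have ht : 0 ≤ C k 1 i - ra * C k 0 i := by linarith
    have hg : 0 ≤ (1 - ra * rb) * (A r 0 * C k 0 i + A r 1 * C k 1 i) := by
      nlinarith [mul_nonneg hs h0, mul_nonneg ht h1]
    exact nonneg_of_mul_nonneg_right hg hden
end

section
/- Let f ∈ ℝ^M be strictly positive with 𝟙, f, and f⊙f linearly independent, and suppose minᵢ fᵢ < 1 < maxᵢ fᵢ. Suppose s₁ = c₁(t₁f + (1−t₁)𝟙) ⊘ (u₁f + (1−u₁)𝟙) and s₂ = c₂(t₂f + (1−t₂)𝟙) ⊘ (u₂f + (1−u₂)𝟙) with c₁, c₂ ≠ 0, t₁ ≠ u₁, t₂ ≠ u₂, and all denominators elementwise positive. If s₁ = s₂, then (c₁, t₁, u₁) = (c₂, t₂, u₂). -/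
/-- injectivity of the (c,t,u) parameterization of feasible solutions. -/
theorem stmt9 {M : ℕ} (f : Fin M → ℝ) (hf : ∀ i, 0 < f i)
    (hli : LinearIndependent ℝ ![fun _ => (1 : ℝ), f, f * f])
    (hlt : (⨅ i, f i) < 1) (hgt : 1 < ⨆ i, f i)
    (c₁ c₂ t₁ t₂ u₁ u₂ : ℝ)
    (hc₁ : c₁ ≠ 0) (hc₂ : c₂ ≠ 0) (h₁ : t₁ ≠ u₁) (h₂ : t₂ ≠ u₂)
    (hd₁ : ∀ i, 0 < u₁ * f i + (1 - u₁)) (hd₂ : ∀ i, 0 < u₂ * f i + (1 - u₂))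
    (heq : ∀ i, c₁ * (t₁ * f i + (1 - t₁)) / (u₁ * f i + (1 - u₁)) =
               c₂ * (t₂ * f i + (1 - t₂)) / (u₂ * f i + (1 - u₂))) :
    c₁ = c₂ ∧ t₁ = t₂ ∧ u₁ = u₂ := by
  have key : ∀ i, c₁ * (t₁ * f i + (1 - t₁)) * (u₂ * f i + (1 - u₂)) =
      c₂ * (t₂ * f i + (1 - t₂)) * (u₁ * f i + (1 - u₁)) := by
    intro i
    have h := heq i
    rw [div_eq_div_iff (hd₁ i).ne' (hd₂ i).ne'] at h
    linarith
  set A := c₁ * t₁ * u₂ - c₂ * t₂ * u₁ with hAdef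
  set B := c₁ * (t₁ * (1 - u₂) + u₂ * (1 - t₁)) - c₂ * (t₂ * (1 - u₁) + u₁ * (1 - t₂)) with hBdef
  set C := c₁ * (1 - t₁) * (1 - u₂) - c₂ * (1 - t₂) * (1 - u₁) with hCdef
  rw [Fintype.linearIndependent_iff] at hli
  have h0 : ∑ j : Fin 3, (![C, B, A]) j • (![fun _ => (1 : ℝ), f, f * f]) j = 0 := by
    funext i
    simp only [Fin.sum_univ_three, Matrix.cons_val_zero, Matrix.cons_val_one, Matrix.head_cons,
      Matrix.cons_val_two, Matrix.tail_cons, Pi.add_apply, Pi.smul_apply, Pi.mul_apply,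
      Pi.zero_apply, smul_eq_mul]
    have := key i
    rw [hAdef, hBdef, hCdef]
    nlinarith [key i]
  have hA : A = 0 := by simpa using hli ![C, B, A] h0 2
  have hB : B = 0 := by simpa using hli ![C, B, A] h0 1
  have hC : C = 0 := by simpa using hli ![C, B, A] h0 0
  rw [hAdef] at hA
  rw [hBdef] at hB
  rw [hCdef] at hC
  have hc : c₁ = c₂ := by linear_combination hA + hB + hC
  have hp : t₁ * u₂ = t₂ * u₁ := by
    have : c₁ * (t₁ * u₂) = c₁ * (t₂ * u₁) := by linear_combination hA - t₂ * u₁ * hc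
    exact mul_left_cancel₀ hc₁ this
  have hs : t₁ + u₂ = t₂ + u₁ := by
    have : c₁ * (t₁ + u₂) = c₁ * (t₂ + u₁) := by
      linear_combination hB + 2 * c₁ * hp - (t₂ + u₁ - 2 * t₂ * u₁) * hc
    exact mul_left_cancel₀ hc₁ this
  have hz : (t₁ - t₂) * (t₂ - u₂) = 0 := by linear_combination t₂ * hs - hp
  rcases mul_eq_zero.mp hz with h | h
  · have ht : t₁ = t₂ := by linarith
    exact ⟨hc, ht, by linarith⟩
  · exact absurd (by linarith : t₂ = u₂) h₂
end

section
/- Let s : ℝ³ → ℝ^M be a differentiable map with partial derivatives ∂s/∂c = s/c, ∂s/∂t = (s − c𝟙)/(t−u), ∂s/∂u = −((1/c)s⊙s − s)/(t−u) at a point where c > 0, t ≠ u, and s has strictly positive entries. Define J(c,t,u) = (sᵀ𝟙)/‖s‖. Then ∂J/∂c = 0, ∂J/∂t = −c·K₁(s)/((t−u)‖s‖³), and ∂J/∂u = K₂(s)/(c(t−u)‖s‖³), where K₁(s) = ‖s‖²‖𝟙‖² − (sᵀ𝟙)² and K₂(s) = (sᵀ(s⊙s))(sᵀ𝟙) − ‖s‖⁴.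 -/
/-!
Along any curve `g` with `∑ gᵢ² ≠ 0`, the chain rule gives the derivative of
`J(s) = (sᵀ𝟙)/‖s‖` as `(‖s‖² (vᵀ𝟙) − (sᵀ𝟙)(sᵀv))/‖s‖³` for velocity `v`. All three given partial
derivatives of `s` are quadratic polynomials in the entries of `s`, `v = a s + b s⊙s + d 𝟙`, and
for those the numerator collapses to `d K₁(s) − b K₂(s)`: the term `a s` drops out because `J`
is invariant under scaling, which is why `∂J/∂c = 0`.
-/

open Finset

section
variable {ι : Type*} [Fintype ι] {g : ℝ → ι → ℝ} {v : ι → ℝ} {x : ℝ}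

theorem hasDerivAt_sum_div_sqrt_sum_sq (hg : HasDerivAt g v x) (hQ : ∑ i, g x i ^ 2 ≠ 0) :
    HasDerivAt (fun y => (∑ i, g y i) / √(∑ i, g y i ^ 2))
      (((∑ i, g x i ^ 2) * ∑ i, v i - (∑ i, g x i) * ∑ i, g x i * v i) /
        √(∑ i, g x i ^ 2) ^ 3) x := by
  have hcoord (i : ι) : HasDerivAt (fun y => g y i) (v i) x := hasDerivAt_pi.mp hg i
  have hsum : HasDerivAt (fun y => ∑ i, g y i) (∑ i, v i) x :=
    .fun_sum fun i _ => hcoord i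
  have hsq : HasDerivAt (fun y => ∑ i, g y i ^ 2) (2 * ∑ i, g x i * v i) x := by
    rw [mul_sum]
    exact .fun_sum fun i _ => by simpa [mul_assoc] using (hcoord i).fun_pow 2
  have hnorm : HasDerivAt (fun y => √(∑ i, g y i ^ 2))
      (2 * (∑ i, g x i * v i) / (2 * √(∑ i, g x i ^ 2))) x := hsq.sqrt hQ
  have hQ' : 0 ≤ ∑ i, g x i ^ 2 := by positivity
  have hR : √(∑ i, g x i ^ 2) ≠ 0 := Real.sqrt_ne_zero hQ' |>.mpr hQ
  refine (hsum.fun_div hnorm hR).congr_deriv ?_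
  field_simp
  rw [Real.sq_sqrt hQ']

theorem hasDerivAt_sum_div_sqrt_sum_sq_of_quadratic (a b d : ℝ) (hg : HasDerivAt g v x)
    (hQ : ∑ i, g x i ^ 2 ≠ 0)
    (hv : ∀ i, v i = a * g x i + b * g x i ^ 2 + d) :
    HasDerivAt (fun y => (∑ i, g y i) / √(∑ i, g y i ^ 2))
      ((d * ((∑ i, g x i ^ 2) * Fintype.card ι - (∑ i, g x i) ^ 2) -
        b * ((∑ i, g x i ^ 3) * (∑ i, g x i) - (∑ i, g x i ^ 2) ^ 2)) /
        √(∑ i, g x i ^ 2) ^ 3) x := by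
  have hgv (i : ι) : g x i * v i = a * g x i ^ 2 + b * g x i ^ 3 + d * g x i := by
    rw [hv]; ring
  refine (hasDerivAt_sum_div_sqrt_sum_sq hg hQ).congr_deriv ?_
  simp only [hgv]
  simp only [hv, sum_add_distrib, ← mul_sum, sum_const, card_univ, nsmul_eq_mul]
  ring

end

theorem stmt19_general {M : ℕ} (s : ℝ → ℝ → ℝ → (Fin M → ℝ)) (c t u : ℝ)
    (hpos : ∀ i, 0 < s c t u i)
    (hdc : HasDerivAt (fun c' => s c' t u) ((1 / c) • s c t u) c)
    (hdt : HasDerivAt (fun t' => s c t' u)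
      ((1 / (t - u)) • (s c t u - fun _ => c)) t)
    (hdu : HasDerivAt (fun u' => s c t u')
      (-(1 / (t - u)) • ((1 / c) • (s c t u * s c t u) - s c t u)) u) :
    HasDerivAt (fun c' => (∑ i, s c' t u i) / Real.sqrt (∑ i, s c' t u i ^ 2)) 0 c ∧
    HasDerivAt (fun t' => (∑ i, s c t' u i) / Real.sqrt (∑ i, s c t' u i ^ 2))
      (-(c * ((∑ i, s c t u i ^ 2) * (M : ℝ) - (∑ i, s c t u i) ^ 2)) /
        ((t - u) * Real.sqrt (∑ i, s c t u i ^ 2) ^ 3)) t ∧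
    HasDerivAt (fun u' => (∑ i, s c t u' i) / Real.sqrt (∑ i, s c t u' i ^ 2))
      (((∑ i, s c t u i ^ 3) * (∑ i, s c t u i) - (∑ i, s c t u i ^ 2) ^ 2) /
        (c * (t - u) * Real.sqrt (∑ i, s c t u i ^ 2) ^ 3)) u := by
  obtain rfl | hM := Nat.eq_zero_or_pos M
  · simp only [univ_eq_empty, sum_empty]
    refine ⟨?_, ?_, ?_⟩ <;> simpa using hasDerivAt_const _ (0 : ℝ)
  have hQ : ∑ i, s c t u i ^ 2 ≠ 0 :=
    (sum_pos (fun i _ => pow_pos (hpos i) 2) (univ_nonempty_iff.mpr ⟨⟨0, hM⟩⟩)).ne'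
  have hJc := hasDerivAt_sum_div_sqrt_sum_sq_of_quadratic (1 / c) 0 0 hdc hQ fun i => by simp
  have hJt := hasDerivAt_sum_div_sqrt_sum_sq_of_quadratic (1 / (t - u)) 0 (-c / (t - u)) hdt hQ
    fun i => by simp; ring
  have hJu := hasDerivAt_sum_div_sqrt_sum_sq_of_quadratic (1 / (t - u)) (-1 / (t - u) / c) 0
    hdu hQ fun i => by simp; ring
  rw [Fintype.card_fin] at hJt
  refine ⟨hJc.congr_deriv ?_, hJt.congr_deriv ?_, hJu.congr_deriv ?_⟩ <;>
    simp only [div_eq_mul_inv, mul_inv] <;> ring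

/-- partial derivatives of J(c,t,u) = (sᵀ𝟙)/‖s‖ via the chain rule. -/
theorem stmt19 {M : ℕ} (s : ℝ → ℝ → ℝ → (Fin M → ℝ)) (c t u : ℝ)
    (hc : 0 < c) (htu : t ≠ u) (hpos : ∀ i, 0 < s c t u i)
    (hdc : HasDerivAt (fun c' => s c' t u) ((1 / c) • s c t u) c)
    (hdt : HasDerivAt (fun t' => s c t' u)
      ((1 / (t - u)) • (s c t u - fun _ => c)) t)
    (hdu : HasDerivAt (fun u' => s c t u')
      (-(1 / (t - u)) • ((1 / c) • (s c t u * s c t u) - s c t u)) u) :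
    HasDerivAt (fun c' => (∑ i, s c' t u i) / Real.sqrt (∑ i, s c' t u i ^ 2)) 0 c ∧
    HasDerivAt (fun t' => (∑ i, s c t' u i) / Real.sqrt (∑ i, s c t' u i ^ 2))
      (-(c * ((∑ i, s c t u i ^ 2) * (M : ℝ) - (∑ i, s c t u i) ^ 2)) /
        ((t - u) * Real.sqrt (∑ i, s c t u i ^ 2) ^ 3)) t ∧
    HasDerivAt (fun u' => (∑ i, s c t u' i) / Real.sqrt (∑ i, s c t u' i ^ 2))
      (((∑ i, s c t u i ^ 3) * (∑ i, s c t u i) - (∑ i, s c t u i ^ 2) ^ 2) /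
        (c * (t - u) * Real.sqrt (∑ i, s c t u i ^ 2) ^ 3)) u :=
  stmt19_general s c t u hpos hdc hdt hdu
end
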